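/- arXiv:1010.0330 — 2 statements merged into one kernel-verified Lean document; each statement's English description precedes it below -/
import Mathlib

section
/- Let g be a continuous probability density on [0,∞) with distribution G, and for K ∈ D_ℝ[0,∞) (càdlàg) define the linear functional 𝒦_t(f) = f(0)K(t) + ∫₀ᵗ K(u)·ξ_f(t-u) du for absolutely continuous f, where ξ_f = (f(1-G))' = f'(1-G) - fg. Then for f in the Sobolev space H²[0,∞), T < ∞, and 0 ≤ s ≤ t ≤ T: ∫₀ˢ |ξ_f(t-u) - ξ_f(s-u)| du ≤ (T^{1/2}(w_G(t-s) + w_g(t-s)) + (T+1)(t-s)^{1/2})·‖f‖_{H²}, where w_G, w_g are the moduli of continuity of G and g on [0,T]. -/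
open MeasureTheory Set

/-!
Write `ξ_f = f'·(1 - G) - f·g` and treat both products alike: for `F = f'` or `f` with weight
`K = 1 - G` or `g`,
`F(t-u)K(t-u) - F(s-u)K(s-u) = (F(t-u) - F(s-u))K(t-u) + F(s-u)(K(t-u) - K(s-u))`.
By the fundamental theorem of calculus and Cauchy–Schwarz the increment of `F` is at most
`√(t-s)‖F'‖₂`; it is integrated against `|K(t-u)|`, whose integral over `[0,s]` is at most `T`
for `1 - G` and at most `1` for the density `g`. The increment of `K` is at most its modulus of
continuity, integrated against `|F(s-u)|`, and `∫₀ˢ|F| ≤ √T‖F‖₂` by Cauchy–Schwarz again.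
-/

theorem integral_abs_le_sqrt_measureReal_mul_sqrt_integral_sq {α : Type*} [MeasurableSpace α]
    {μ : Measure α} [IsFiniteMeasure μ] {h : α → ℝ} (hh : MemLp h 2 μ) :
    ∫ x, |h x| ∂μ ≤ Real.sqrt (μ.real univ) * Real.sqrt (∫ x, h x ^ 2 ∂μ) := by
  have hpq : Real.HolderConjugate 2 2 := .two_two
  have two : ENNReal.ofReal 2 = 2 := by norm_num
  have holder := integral_mul_norm_le_Lp_mul_Lq (μ := μ) hpq
    (by rw [two]; exact memLp_const (1 : ℝ)) (by rw [two]; exact hh)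
  have sq (y : ℝ) : y ^ (2 : ℝ) = y ^ 2 := Real.rpow_natCast y 2
  simp only [norm_one, one_mul, Real.norm_eq_abs, sq, sq_abs, integral_const, smul_eq_mul,
    one_pow, mul_one] at holder
  rw [Real.sqrt_eq_rpow, Real.sqrt_eq_rpow]
  exact holder

theorem intervalIntegral_le_setIntegral_Ici {φ : ℝ → ℝ} (hφ : ∀ x, 0 ≤ φ x)
    (hint : IntegrableOn φ (Ici 0)) {a b : ℝ} (ha : 0 ≤ a) (hab : a ≤ b) :
    ∫ x in a..b, φ x ≤ ∫ x in Ici (0:ℝ), φ x := by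
  rw [intervalIntegral.integral_of_le hab]
  exact setIntegral_mono_set hint (.of_forall hφ)
    (Filter.Eventually.of_forall fun x hx => ha.trans hx.1.le)

theorem intervalIntegral_abs_sub_le_add {φ ψ : ℝ → ℝ} (hφ : Continuous φ) (hψ : Continuous ψ)
    {a b : ℝ} (hab : a ≤ b) :
    ∫ x in a..b, |φ x - ψ x| ≤ (∫ x in a..b, |φ x|) + ∫ x in a..b, |ψ x| := by
  rw [← intervalIntegral.integral_add (by apply Continuous.intervalIntegrable; fun_prop)
    (by apply Continuous.intervalIntegrable; fun_prop)]
  exact intervalIntegral.integral_mono_on hab (by apply Continuous.intervalIntegrable; fun_prop)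
    (by apply Continuous.intervalIntegrable; fun_prop) fun x _ => abs_sub _ _

theorem sqrt_le_sqrt_add_add {a b c : ℝ} (ha : 0 ≤ a) (hb : 0 ≤ b) (hc : 0 ≤ c) :
    Real.sqrt a ≤ Real.sqrt (a + b + c) ∧ Real.sqrt b ≤ Real.sqrt (a + b + c) ∧
      Real.sqrt c ≤ Real.sqrt (a + b + c) :=
  ⟨Real.sqrt_le_sqrt (by linarith), Real.sqrt_le_sqrt (by linarith),
    Real.sqrt_le_sqrt (by linarith)⟩

section SquareIntegrable

variable {h : ℝ → ℝ} {a b : ℝ}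

theorem memLp_two_restrict_Ioc (hm : AEStronglyMeasurable h)
    (hh : IntegrableOn (fun x => h x ^ 2) (Ici 0)) (ha : 0 ≤ a) :
    MemLp h 2 (volume.restrict (Ioc a b)) :=
  (memLp_two_iff_integrable_sq hm.restrict).mpr
    (hh.mono_set fun _ hx => ha.trans hx.1.le)

theorem intervalIntegral_abs_le_sqrt_mul_sqrt_setIntegral_sq (hm : AEStronglyMeasurable h)
    (hh : IntegrableOn (fun x => h x ^ 2) (Ici 0)) (ha : 0 ≤ a) (hab : a ≤ b) :
    ∫ x in a..b, |h x| ≤ Real.sqrt (b - a) * Real.sqrt (∫ x in Ici (0:ℝ), h x ^ 2) := by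
  have cs := integral_abs_le_sqrt_measureReal_mul_sqrt_integral_sq
    (memLp_two_restrict_Ioc hm hh ha (b := b))
  rw [measureReal_restrict_apply_univ, Real.volume_real_Ioc_of_le hab,
    ← intervalIntegral.integral_of_le hab, ← intervalIntegral.integral_of_le hab] at cs
  refine cs.trans (mul_le_mul_of_nonneg_left (Real.sqrt_le_sqrt ?_) (Real.sqrt_nonneg _))
  exact intervalIntegral_le_setIntegral_Ici (fun x => sq_nonneg (h x)) hh ha hab

theorem abs_sub_le_sqrt_mul_sqrt_setIntegral_deriv_sq {F F' : ℝ → ℝ}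
    (hF : ∀ x, HasDerivAt F (F' x) x) (hF' : IntegrableOn (fun x => F' x ^ 2) (Ici 0))
    (ha : 0 ≤ a) (hab : a ≤ b) :
    |F b - F a| ≤ Real.sqrt (b - a) * Real.sqrt (∫ x in Ici (0:ℝ), F' x ^ 2) := by
  have hm : AEStronglyMeasurable F' := by
    rw [show F' = deriv F from funext fun x => (hF x).deriv.symm]
    exact (measurable_deriv F).aestronglyMeasurable
  have hint : IntervalIntegrable F' volume a b := by
    rw [intervalIntegrable_iff_integrableOn_Ioc_of_le hab]
    exact (memLp_two_restrict_Ioc hm hF' ha).integrable one_le_two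
  rw [← intervalIntegral.integral_eq_sub_of_hasDerivAt (fun x _ => hF x) hint]
  exact (intervalIntegral.abs_integral_le_integral_abs hab).trans
    (intervalIntegral_abs_le_sqrt_mul_sqrt_setIntegral_sq hm hF' ha hab)

end SquareIntegrable

theorem intervalIntegral_mem_Icc_of_integral_Ici_eq_one {g : ℝ → ℝ} (hg0 : ∀ x, 0 ≤ g x)
    (hg1 : ∫ x in Ici (0:ℝ), g x = 1) {a b : ℝ} (ha : 0 ≤ a) (hab : a ≤ b) :
    ∫ x in a..b, g x ∈ Icc (0:ℝ) 1 := by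
  have hint : IntegrableOn g (Ici 0) := by
    by_contra h
    simp [integral_undef h] at hg1
  exact ⟨intervalIntegral.integral_nonneg hab fun x _ => hg0 x,
    hg1 ▸ intervalIntegral_le_setIntegral_Ici hg0 hint ha hab⟩

theorem intervalIntegral_abs_one_sub_comp_sub_le {G : ℝ → ℝ} (hGc : Continuous G)
    (hG : ∀ x, 0 ≤ x → G x ∈ Icc (0:ℝ) 1) {s t : ℝ} (hs : 0 ≤ s) (hst : s ≤ t) :
    ∫ u in (0:ℝ)..s, |1 - G (t - u)| ≤ s := calc
  _ ≤ ∫ _ in (0:ℝ)..s, (1:ℝ) := by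
    refine intervalIntegral.integral_mono_on hs
      (by apply Continuous.intervalIntegrable; fun_prop) intervalIntegrable_const fun u hu => ?_
    obtain ⟨h0, h1⟩ := hG (t - u) (by linarith [hu.2])
    exact abs_le.mpr ⟨by linarith, by linarith⟩
  _ = s := by simp

theorem abs_sub_comp_sub_le_of_modulus {φ ω : ℝ → ℝ} {T s t : ℝ}
    (hφ : ∀ a b, a ∈ Icc (0:ℝ) T → b ∈ Icc (0:ℝ) T → |φ a - φ b| ≤ ω |a - b|)
    (hst : s ≤ t) (htT : t ≤ T) :
    ∀ u ∈ Icc (0:ℝ) s, |φ (t - u) - φ (s - u)| ≤ ω (t - s) := by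
  intro u hu
  have := hφ (t - u) (s - u) ⟨by linarith [hu.2], by linarith [hu.1]⟩
    ⟨by linarith [hu.2], by linarith [hu.1]⟩
  rwa [sub_sub_sub_cancel_right, abs_of_nonneg (sub_nonneg.mpr hst)] at this

theorem intervalIntegral_abs_mul_comp_sub_sub_le {F F' K : ℝ → ℝ}
    (hF : ∀ x, HasDerivAt F (F' x) x) (hF2 : IntegrableOn (fun x => F x ^ 2) (Ici 0))
    (hF'2 : IntegrableOn (fun x => F' x ^ 2) (Ici 0)) (hK : Continuous K) {s t w : ℝ}
    (hs : 0 ≤ s) (hst : s ≤ t) (hw : ∀ u ∈ Icc (0:ℝ) s, |K (t - u) - K (s - u)| ≤ w) :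
    ∫ u in (0:ℝ)..s, |F (t - u) * K (t - u) - F (s - u) * K (s - u)| ≤
      Real.sqrt (t - s) * Real.sqrt (∫ x in Ici (0:ℝ), F' x ^ 2) *
          (∫ u in (0:ℝ)..s, |K (t - u)|) +
        Real.sqrt s * Real.sqrt (∫ x in Ici (0:ℝ), F x ^ 2) * w := by
  set L := Real.sqrt (t - s) * Real.sqrt (∫ x in Ici (0:ℝ), F' x ^ 2)
  have hFc : Continuous F := continuous_iff_continuousAt.mpr fun x => (hF x).continuousAt
  have hw0 : 0 ≤ w := (abs_nonneg _).trans (hw 0 ⟨le_rfl, hs⟩)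
  have pointwise : ∀ u ∈ Icc (0:ℝ) s,
      |F (t - u) * K (t - u) - F (s - u) * K (s - u)| ≤ L * |K (t - u)| + |F (s - u)| * w := by
    intro u hu
    have hFinc : |F (t - u) - F (s - u)| ≤ L := by
      simpa only [sub_sub_sub_cancel_right] using
        abs_sub_le_sqrt_mul_sqrt_setIntegral_deriv_sq hF hF'2 (by linarith [hu.2] : 0 ≤ s - u)
          (by linarith : s - u ≤ t - u)
    calc |F (t - u) * K (t - u) - F (s - u) * K (s - u)|
        = |(F (t - u) - F (s - u)) * K (t - u) + F (s - u) * (K (t - u) - K (s - u))| :=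
          congrArg abs (by ring)
      _ ≤ |F (t - u) - F (s - u)| * |K (t - u)| + |F (s - u)| * |K (t - u) - K (s - u)| := by
          rw [← abs_mul, ← abs_mul]; exact abs_add_le _ _
      _ ≤ L * |K (t - u)| + |F (s - u)| * w := by gcongr; exact hw u hu
  have hFs :
      ∫ u in (0:ℝ)..s, |F (s - u)| ≤ Real.sqrt s * Real.sqrt (∫ x in Ici (0:ℝ), F x ^ 2) := by
    rw [intervalIntegral.integral_comp_sub_left (fun x => |F x|) s, sub_self, sub_zero]
    simpa using intervalIntegral_abs_le_sqrt_mul_sqrt_setIntegral_sq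
      hFc.aestronglyMeasurable hF2 le_rfl hs
  have hKi : IntervalIntegrable (fun u => |K (t - u)|) volume 0 s := by
    apply Continuous.intervalIntegrable; fun_prop
  have hFi : IntervalIntegrable (fun u => |F (s - u)|) volume 0 s := by
    apply Continuous.intervalIntegrable; fun_prop
  calc _ ≤ ∫ u in (0:ℝ)..s, (L * |K (t - u)| + |F (s - u)| * w) :=
        intervalIntegral.integral_mono_on hs (by apply Continuous.intervalIntegrable; fun_prop)
          ((hKi.const_mul L).add (hFi.mul_const w)) pointwise
    _ = L * (∫ u in (0:ℝ)..s, |K (t - u)|) + (∫ u in (0:ℝ)..s, |F (s - u)|) * w := by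
        rw [intervalIntegral.integral_add (hKi.const_mul L) (hFi.mul_const w),
          intervalIntegral.integral_const_mul, intervalIntegral.integral_mul_const]
    _ ≤ _ := add_le_add_right (mul_le_mul_of_nonneg_right hFs hw0) _

theorem stmt13_general (g G : ℝ → ℝ) (hgc : Continuous g) (hg0 : ∀ x, 0 ≤ g x)
    (hg1 : ∫ x in Ici (0:ℝ), g x = 1)
    (hG : ∀ x, G x = ∫ u in (0:ℝ)..x, g u)
    (T : ℝ)
    (wG wg : ℝ → ℝ)
    (hwG : ∀ a b, a ∈ Icc (0:ℝ) T → b ∈ Icc (0:ℝ) T → |G a - G b| ≤ wG |a - b|)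
    (hwg : ∀ a b, a ∈ Icc (0:ℝ) T → b ∈ Icc (0:ℝ) T → |g a - g b| ≤ wg |a - b|)
    (f f₁ f₂ : ℝ → ℝ)
    (hd1 : ∀ x, HasDerivAt f (f₁ x) x)
    (hd2 : ∀ x, HasDerivAt f₁ (f₂ x) x)
    (hf2 : IntegrableOn (fun x => (f x) ^ 2) (Ici 0))
    (hf12 : IntegrableOn (fun x => (f₁ x) ^ 2) (Ici 0))
    (hf22 : IntegrableOn (fun x => (f₂ x) ^ 2) (Ici 0)) :
    ∀ s t : ℝ, 0 ≤ s → s ≤ t → t ≤ T →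
      (∫ u in (0:ℝ)..s,
        |(f₁ (t - u) * (1 - G (t - u)) - f (t - u) * g (t - u)) -
          (f₁ (s - u) * (1 - G (s - u)) - f (s - u) * g (s - u))|)
        ≤ (Real.sqrt T * (wG (t - s) + wg (t - s)) + (T + 1) * Real.sqrt (t - s)) *
            Real.sqrt ((∫ x in Ici (0:ℝ), (f x) ^ 2) + (∫ x in Ici (0:ℝ), (f₁ x) ^ 2) +
              (∫ x in Ici (0:ℝ), (f₂ x) ^ 2)) := by
  intro s t hs hst htT
  have hGc : Continuous G := by
    rw [funext hG]; exact intervalIntegral.continuous_primitive (hgc.intervalIntegrable · ·) 0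
  have hfc : Continuous f := continuous_iff_continuousAt.mpr fun x => (hd1 x).continuousAt
  have hf₁c : Continuous f₁ := continuous_iff_continuousAt.mpr fun x => (hd2 x).continuousAt
  have hG01 (x : ℝ) (hx : 0 ≤ x) : G x ∈ Icc (0:ℝ) 1 :=
    hG x ▸ intervalIntegral_mem_Icc_of_integral_Ici_eq_one hg0 hg1 le_rfl hx
  have hmodG := abs_sub_comp_sub_le_of_modulus hwG hst htT
  have hmodg := abs_sub_comp_sub_le_of_modulus hwg hst htT
  have hintG : ∫ u in (0:ℝ)..s, |1 - G (t - u)| ≤ T :=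
    (intervalIntegral_abs_one_sub_comp_sub_le hGc hG01 hs hst).trans (hst.trans htT)
  have hintg : ∫ u in (0:ℝ)..s, |g (t - u)| ≤ 1 := by
    simp_rw [abs_of_nonneg (hg0 _)]
    rw [intervalIntegral.integral_comp_sub_left g t, sub_zero]
    exact (intervalIntegral_mem_Icc_of_integral_Ici_eq_one hg0 hg1 (by linarith) (by linarith)).2
  have hf₁G := intervalIntegral_abs_mul_comp_sub_sub_le hd2 hf12 hf22 (continuous_const.sub hGc)
    hs hst (K := fun x => 1 - G x) fun u hu => by
      simpa only [sub_sub_sub_cancel_left, abs_sub_comm] using hmodG u hu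
  have hfg := intervalIntegral_abs_mul_comp_sub_sub_le hd1 hf2 hf12 hgc hs hst hmodg
  have hsq (φ : ℝ → ℝ) : 0 ≤ ∫ x in Ici (0:ℝ), φ x ^ 2 :=
    setIntegral_nonneg measurableSet_Ici fun x _ => sq_nonneg _
  obtain ⟨hf, hf₁, hf₂⟩ := sqrt_le_sqrt_add_add (hsq f) (hsq f₁) (hsq f₂)
  have hwG0 : 0 ≤ wG (t - s) := (abs_nonneg _).trans (hmodG 0 ⟨le_rfl, hs⟩)
  have hwg0 : 0 ≤ wg (t - s) := (abs_nonneg _).trans (hmodg 0 ⟨le_rfl, hs⟩)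
  have hsT : Real.sqrt s ≤ Real.sqrt T := Real.sqrt_le_sqrt (hst.trans htT)
  set N := Real.sqrt ((∫ x in Ici (0:ℝ), (f x) ^ 2) + (∫ x in Ici (0:ℝ), (f₁ x) ^ 2) +
    (∫ x in Ici (0:ℝ), (f₂ x) ^ 2))
  calc
    _ = ∫ u in (0:ℝ)..s, |(f₁ (t - u) * (1 - G (t - u)) - f₁ (s - u) * (1 - G (s - u))) -
          (f (t - u) * g (t - u) - f (s - u) * g (s - u))| :=
      intervalIntegral.integral_congr fun u _ => congrArg abs (by ring)
    _ ≤ _ := intervalIntegral_abs_sub_le_add (by fun_prop) (by fun_prop) hs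
    _ ≤ _ := add_le_add hf₁G hfg
    _ ≤ (Real.sqrt (t - s) * N * T + Real.sqrt T * N * wG (t - s)) +
        (Real.sqrt (t - s) * N * 1 + Real.sqrt T * N * wg (t - s)) := by
      gcongr <;> exact intervalIntegral.integral_nonneg hs fun u _ => abs_nonneg _
    _ = _ := by ring

/-- Modulus-of-continuity estimate for the convolution kernel `ξ_f = f'(1-G) - fg`:
for `f ∈ H²[0,∞)` and `0 ≤ s ≤ t ≤ T`,
`∫₀ˢ |ξ_f(t-u) - ξ_f(s-u)| du ≤ (√T(w_G(t-s) + w_g(t-s)) + (T+1)√(t-s))·‖f‖_{H²}`. -/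
theorem stmt13 (g G : ℝ → ℝ) (hgc : Continuous g) (hg0 : ∀ x, 0 ≤ g x)
    (hg1 : ∫ x in Ici (0:ℝ), g x = 1)
    (hG : ∀ x, G x = ∫ u in (0:ℝ)..x, g u)
    (T : ℝ) (hT : 0 < T)
    (wG wg : ℝ → ℝ)
    (hwG : ∀ a b, a ∈ Icc (0:ℝ) T → b ∈ Icc (0:ℝ) T → |G a - G b| ≤ wG |a - b|)
    (hwg : ∀ a b, a ∈ Icc (0:ℝ) T → b ∈ Icc (0:ℝ) T → |g a - g b| ≤ wg |a - b|)
    (f f₁ f₂ : ℝ → ℝ)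
    (hd1 : ∀ x, HasDerivAt f (f₁ x) x)
    (hd2 : ∀ x, HasDerivAt f₁ (f₂ x) x)
    (hf2 : IntegrableOn (fun x => (f x) ^ 2) (Ici 0))
    (hf12 : IntegrableOn (fun x => (f₁ x) ^ 2) (Ici 0))
    (hf22 : IntegrableOn (fun x => (f₂ x) ^ 2) (Ici 0)) :
    ∀ s t : ℝ, 0 ≤ s → s ≤ t → t ≤ T →
      (∫ u in (0:ℝ)..s,
        |(f₁ (t - u) * (1 - G (t - u)) - f (t - u) * g (t - u)) -
          (f₁ (s - u) * (1 - G (s - u)) - f (s - u) * g (s - u))|)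
        ≤ (Real.sqrt T * (wG (t - s) + wg (t - s)) + (T + 1) * Real.sqrt (t - s)) *
            Real.sqrt ((∫ x in Ici (0:ℝ), (f x) ^ 2) + (∫ x in Ici (0:ℝ), (f₁ x) ^ 2) +
              (∫ x in Ici (0:ℝ), (f₂ x) ^ 2)) :=
  stmt13_general g G hgc hg0 hg1 hG T wG wg hwG hwg f f₁ f₂ hd1 hd2 hf2 hf12 hf22
end

section
/- Let g be a continuous probability density on [0,∞), let Γ be the map taking K ∈ D_ℝ[0,∞) to the H₋₂-valued function 𝒦 defined by 𝒦_t(f) = f(0)K(t) + ∫₀ᵗ K(u)(f(1-G))'(t-u) du. Then if K is continuous, 𝒦 is a continuous H₋₂-valued function, and Γ is continuous from C_ℝ[0,∞) to C_{H₋₂}[0,∞) when both are equipped with the topology of uniform convergence on compacts. -/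
/-!
The one-dimensional Sobolev embedding `|f x|² ≤ ‖f‖²_{L²} + ‖f'‖²_{L²}` on `[0, ∞)`, applied to
`f` and `f'`, bounds `|f 0|` and, because `0 ≤ G ≤ 1` and `g` is bounded on `[0, T]`, the kernel
`ξ_f = f'(1 - G) - f g` on `[0, T]` by multiples of `‖f‖_{H²}`. Both claims are then estimates for
`a K t + ∫₀ᵗ K u ξ(t - u) du` with `|a| ≤ H` and `|ξ| ≤ B H` on `[0, T]`. This is linear in `K`,
which gives the Lipschitz bound. For continuity in `t`, the value at `t'` is the value at `t` for
the shifted function `K (· + (t' - t))` plus an integral over `[t, t']`, so it reduces to the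
uniform continuity of `K` on `[-T, T]`.
-/

open MeasureTheory Set

/-- The `H²[0,∞)` norm of `u` with first and second derivatives `u₁`, `u₂`. -/
noncomputable def H2norm (u u₁ u₂ : ℝ → ℝ) : ℝ :=
  Real.sqrt ((∫ x in Set.Ici (0:ℝ), (u x) ^ 2) + (∫ x in Set.Ici (0:ℝ), (u₁ x) ^ 2) +
    (∫ x in Set.Ici (0:ℝ), (u₂ x) ^ 2))

open scoped Interval

lemma exists_sq_lt_of_integrableOn_Ici {f : ℝ → ℝ}
    (hf : IntegrableOn (fun x => f x ^ 2) (Ici 0)) {ε : ℝ} (hε : 0 < ε) :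
    ∃ y, 0 ≤ y ∧ f y ^ 2 < ε := by
  by_contra! h
  have hconst : IntegrableOn (fun _ => ε) (Ici (0:ℝ)) :=
    hf.mono' aestronglyMeasurable_const <| (ae_restrict_mem measurableSet_Ici).mono
      fun y hy => by simpa [abs_of_pos hε] using h y hy
  rw [integrableOn_const_iff] at hconst
  simp [hε.ne', Real.volume_Ici] at hconst

section Sobolev

variable {f f₁ : ℝ → ℝ}

lemma sq_sub_sq_le_integral_sq_add_integral_sq_deriv (hf : ∀ x, HasDerivAt f (f₁ x) x)
    (h0 : IntegrableOn (fun x => f x ^ 2) (Ici 0)) (h1 : IntegrableOn (fun x => f₁ x ^ 2) (Ici 0))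
    {x y : ℝ} (hx : 0 ≤ x) (hy : 0 ≤ y) :
    f x ^ 2 - f y ^ 2 ≤ (∫ x in Ici 0, f x ^ 2) + ∫ x in Ici 0, f₁ x ^ 2 := by
  have hsub : Ι y x ⊆ Ici 0 := fun s hs => (le_min hy hx).trans hs.1.le
  have hsum : IntegrableOn (fun s => f s ^ 2 + f₁ s ^ 2) (Ici 0) := h0.add h1
  have hpt : ∀ s, ‖2 * f s * f₁ s‖ ≤ f s ^ 2 + f₁ s ^ 2 := fun s => by
    simpa only [norm_mul, Real.norm_eq_abs, abs_two, sq_abs] using two_mul_le_add_sq |f s| |f₁ s|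
  have hf₁m : Measurable f₁ := by
    simpa only [funext fun z => (hf z).deriv] using measurable_deriv f
  have hfc : Continuous f := continuous_iff_continuousAt.2 fun z => (hf z).continuousAt
  have hint : IntegrableOn (fun s => 2 * f s * f₁ s) (Ι y x) :=
    (hsum.mono_set hsub).mono' ((hfc.measurable.const_mul 2).mul hf₁m).aestronglyMeasurable
      (Filter.Eventually.of_forall hpt)
  calc f x ^ 2 - f y ^ 2 = ∫ s in y..x, 2 * f s * f₁ s := by
        refine (intervalIntegral.integral_eq_sub_of_hasDerivAt (f := fun s => f s ^ 2)
          (fun s _ => ?_) (intervalIntegrable_iff.2 hint)).symm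
        simpa using (hf s).fun_pow 2
    _ ≤ ∫ s in Ι y x, ‖2 * f s * f₁ s‖ :=
        (le_abs_self _).trans
          (Real.norm_eq_abs _ ▸ intervalIntegral.norm_integral_le_integral_norm_uIoc)
    _ ≤ ∫ s in Ι y x, (f s ^ 2 + f₁ s ^ 2) :=
        setIntegral_mono_on hint.norm (hsum.mono_set hsub) measurableSet_uIoc fun s _ => hpt s
    _ ≤ ∫ s in Ici 0, (f s ^ 2 + f₁ s ^ 2) :=
        setIntegral_mono_set hsum (Filter.Eventually.of_forall fun s => by positivity)
          hsub.eventuallyLE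
    _ = _ := integral_add h0 h1

lemma sq_le_integral_sq_add_integral_sq_deriv (hf : ∀ x, HasDerivAt f (f₁ x) x)
    (h0 : IntegrableOn (fun x => f x ^ 2) (Ici 0)) (h1 : IntegrableOn (fun x => f₁ x ^ 2) (Ici 0))
    {x : ℝ} (hx : 0 ≤ x) :
    f x ^ 2 ≤ (∫ x in Ici 0, f x ^ 2) + ∫ x in Ici 0, f₁ x ^ 2 := by
  refine le_of_forall_pos_lt_add fun ε hε => ?_
  obtain ⟨y, hy, hfy⟩ := exists_sq_lt_of_integrableOn_Ici h0 hε
  linarith [sq_sub_sq_le_integral_sq_add_integral_sq_deriv hf h0 h1 hx hy]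

lemma abs_le_H2norm (f₂ : ℝ → ℝ) (hf : ∀ x, HasDerivAt f (f₁ x) x)
    (h0 : IntegrableOn (fun x => f x ^ 2) (Ici 0)) (h1 : IntegrableOn (fun x => f₁ x ^ 2) (Ici 0))
    {x : ℝ} (hx : 0 ≤ x) : |f x| ≤ H2norm f f₁ f₂ := by
  refine Real.abs_le_sqrt ?_
  have : 0 ≤ ∫ x in Ici (0:ℝ), f₂ x ^ 2 :=
    setIntegral_nonneg measurableSet_Ici fun _ _ => sq_nonneg _
  linarith [sq_le_integral_sq_add_integral_sq_deriv hf h0 h1 hx]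

lemma abs_deriv_le_H2norm {f₂ : ℝ → ℝ} (hf₁ : ∀ x, HasDerivAt f₁ (f₂ x) x)
    (h1 : IntegrableOn (fun x => f₁ x ^ 2) (Ici 0)) (h2 : IntegrableOn (fun x => f₂ x ^ 2) (Ici 0))
    {x : ℝ} (hx : 0 ≤ x) : |f₁ x| ≤ H2norm f f₁ f₂ := by
  refine Real.abs_le_sqrt ?_
  have : 0 ≤ ∫ x in Ici (0:ℝ), f x ^ 2 :=
    setIntegral_nonneg measurableSet_Ici fun _ _ => sq_nonneg _
  linarith [sq_le_integral_sq_add_integral_sq_deriv hf₁ h1 h2 hx]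

end Sobolev

/-- `𝒦_t(f)` for the kernel `K`, written in terms of `a = f 0` and `ξ = ξ_f` only. -/
noncomputable def convFunctional (a : ℝ) (ξ K : ℝ → ℝ) (t : ℝ) : ℝ :=
  a * K t + ∫ u in (0:ℝ)..t, K u * ξ (t - u)

section convFunctional

variable {a T t M η : ℝ} {ξ K K' : ℝ → ℝ}

lemma convFunctional_sub (hK : Continuous K) (hK' : Continuous K') (hξ : Continuous ξ) (t : ℝ) :
    convFunctional a ξ K t - convFunctional a ξ K' t = convFunctional a ξ (K - K') t := by
  have hint {L : ℝ → ℝ} (hL : Continuous L) :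
      IntervalIntegrable (fun u => L u * ξ (t - u)) volume 0 t :=
    (hL.mul (hξ.comp (continuous_const.sub continuous_id))).intervalIntegrable 0 t
  unfold convFunctional
  simp only [Pi.sub_apply, sub_mul]
  rw [intervalIntegral.integral_sub (hint hK) (hint hK')]
  ring

lemma abs_convFunctional_le (hK : ∀ u ∈ Icc 0 T, |K u| ≤ η) (hξ : ∀ s ∈ Icc 0 T, |ξ s| ≤ M)
    (ht : t ∈ Icc 0 T) : |convFunctional a ξ K t| ≤ (|a| + T * M) * η := by
  have hη : 0 ≤ η := (abs_nonneg _).trans (hK t ht)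
  have hM : 0 ≤ M := (abs_nonneg _).trans (hξ t ht)
  have hint : ‖∫ u in (0:ℝ)..t, K u * ξ (t - u)‖ ≤ η * M * |t - 0| := by
    refine intervalIntegral.norm_integral_le_of_norm_le_const fun u hu => ?_
    rw [uIoc_of_le ht.1] at hu
    rw [Real.norm_eq_abs, abs_mul]
    exact mul_le_mul (hK u ⟨hu.1.le, hu.2.trans ht.2⟩)
      (hξ _ ⟨by linarith [hu.2], by linarith [hu.1, ht.2]⟩) (abs_nonneg _) hη
  rw [Real.norm_eq_abs, sub_zero, abs_of_nonneg ht.1] at hint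
  calc |convFunctional a ξ K t|
      ≤ |a| * |K t| + |∫ u in (0:ℝ)..t, K u * ξ (t - u)| := by
        rw [convFunctional, ← abs_mul]; exact abs_add_le _ _
    _ ≤ |a| * η + η * M * T := by
        gcongr
        · exact hK t ht
        · exact hint.trans (by gcongr; exact ht.2)
    _ = (|a| + T * M) * η := by ring

lemma convFunctional_eq_shift_add (hK : Continuous K) (hξ : Continuous ξ) (t t' : ℝ) :
    convFunctional a ξ K t' =
      convFunctional a ξ (fun u => K (u + (t' - t))) t + ∫ s in t..t', K (t' - s) * ξ s := by
  have hflip (L : ℝ → ℝ) (r : ℝ) :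
      ∫ u in (0:ℝ)..r, L u * ξ (r - u) = ∫ s in (0:ℝ)..r, L (r - s) * ξ s := by
    simpa using
      intervalIntegral.integral_comp_sub_left (a := 0) (b := r) (fun u => L (r - u) * ξ u) r
  have hint (c d : ℝ) : IntervalIntegrable (fun s => K (t' - s) * ξ s) volume c d :=
    ((hK.comp (continuous_const.sub continuous_id)).mul hξ).intervalIntegrable c d
  have hshift (s : ℝ) : s + (t' - t) = t' - (t - s) := by ring
  simp only [convFunctional, hflip, hshift, sub_self, sub_zero, sub_sub_cancel,
    ← intervalIntegral.integral_add_adjacent_intervals (hint 0 t) (hint t t')]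
  ring

lemma abs_convFunctional_sub_convFunctional_le {MK δ ε t' : ℝ} (hK : Continuous K)
    (hξ : Continuous ξ) (hξM : ∀ s ∈ Icc 0 T, |ξ s| ≤ M) (hKM : ∀ x ∈ Icc (-T) T, |K x| ≤ MK)
    (hKε : ∀ x ∈ Icc (-T) T, ∀ y ∈ Icc (-T) T, |x - y| < δ → |K x - K y| ≤ ε)
    (ht : t ∈ Icc 0 T) (ht' : t' ∈ Icc 0 T) (htt' : |t' - t| < δ) :
    |convFunctional a ξ K t' - convFunctional a ξ K t| ≤ (|a| + T * M) * ε + MK * M * |t' - t| := by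
  have hM : 0 ≤ M := (abs_nonneg _).trans (hξM t ht)
  have hMK : 0 ≤ MK := (abs_nonneg _).trans (hKM t ⟨by linarith [ht.1, ht.2], ht.2⟩)
  have hshift : Continuous fun u => K (u + (t' - t)) := hK.comp (continuous_add_const _)
  have hdiff : ∀ u ∈ Icc 0 t, |((fun u => K (u + (t' - t))) - K) u| ≤ ε := fun u hu =>
    hKε _ ⟨by linarith [hu.1, ht'.1, ht.2], by linarith [hu.2, ht'.2]⟩
      _ ⟨by linarith [hu.1, ht.1, ht.2], hu.2.trans ht.2⟩ (by rwa [add_sub_cancel_left])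
  have hε : 0 ≤ ε := (abs_nonneg _).trans (hdiff 0 ⟨le_rfl, ht.1⟩)
  have hhead : |convFunctional a ξ ((fun u => K (u + (t' - t))) - K) t| ≤ (|a| + t * M) * ε :=
    abs_convFunctional_le hdiff (fun s hs => hξM s ⟨hs.1, hs.2.trans ht.2⟩) (right_mem_Icc.2 ht.1)
  have htail : ‖∫ s in t..t', K (t' - s) * ξ s‖ ≤ MK * M * |t' - t| := by
    refine intervalIntegral.norm_integral_le_of_norm_le_const fun s hs => ?_
    have hs0 : 0 ≤ s := (le_min ht.1 ht'.1).trans hs.1.le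
    have hsT : s ≤ T := hs.2.trans (max_le ht.2 ht'.2)
    rw [Real.norm_eq_abs, abs_mul]
    exact mul_le_mul (hKM _ ⟨by linarith [ht'.1], by linarith [ht'.2]⟩) (hξM s ⟨hs0, hsT⟩)
      (abs_nonneg _) hMK
  rw [convFunctional_eq_shift_add hK hξ t t', add_sub_right_comm,
    convFunctional_sub hshift hK hξ]
  calc _ ≤ |convFunctional a ξ ((fun u => K (u + (t' - t))) - K) t|
        + |∫ s in t..t', K (t' - s) * ξ s| := abs_add_le _ _
    _ ≤ (|a| + T * M) * ε + MK * M * |t' - t| := by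
        gcongr
        · exact hhead.trans (by gcongr; exact ht.2)
        · exact htail

end convFunctional

lemma exists_pos_forall_abs_convFunctional_sub_le {K : ℝ → ℝ} (hK : Continuous K) {T B ε : ℝ}
    (hT : 0 ≤ T) (hB : 0 ≤ B) (hε : 0 < ε) :
    ∃ δ > 0, ∀ t ∈ Icc 0 T, ∀ t' ∈ Icc 0 T, |t' - t| < δ → ∀ (a H : ℝ) (ξ : ℝ → ℝ),
      Continuous ξ → |a| ≤ H → (∀ s ∈ Icc 0 T, |ξ s| ≤ B * H) →
      |convFunctional a ξ K t' - convFunctional a ξ K t| ≤ ε * H := by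
  obtain ⟨MK, hMK⟩ := (isCompact_Icc (a := -T) (b := T)).exists_bound_of_continuousOn
    hK.continuousOn
  have hMK0 : 0 ≤ MK := (norm_nonneg _).trans (hMK 0 ⟨by linarith, hT⟩)
  set ε₀ := ε / (2 * (1 + T * B))
  obtain ⟨δ₀, hδ₀, hKδ₀⟩ := Metric.uniformContinuousOn_iff.1
    ((isCompact_Icc (a := -T) (b := T)).uniformContinuousOn_of_continuous hK.continuousOn) ε₀
    (by positivity)
  set δ₁ := ε / (2 * (1 + MK * B))
  refine ⟨min δ₀ δ₁, by positivity, fun t ht t' ht' htt' a H ξ hξ ha hξH => ?_⟩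
  have hH : 0 ≤ H := (abs_nonneg a).trans ha
  have hδ₁ : MK * B * δ₁ ≤ ε / 2 := by
    rw [mul_div_assoc', div_le_div_iff₀ (by positivity) two_pos]
    nlinarith [mul_nonneg hMK0 hB]
  have hε₀ : (1 + T * B) * ε₀ = ε / 2 := by
    simp only [ε₀]
    field_simp
  calc |convFunctional a ξ K t' - convFunctional a ξ K t|
      ≤ (|a| + T * (B * H)) * ε₀ + MK * (B * H) * |t' - t| :=
        abs_convFunctional_sub_convFunctional_le hK hξ hξH hMK
          (fun x hx y hy hxy => (hKδ₀ x hx y hy (by rwa [Real.dist_eq])).le) ht ht'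
          (htt'.trans_le (min_le_left _ _))
    _ ≤ (1 + T * B) * ε₀ * H + MK * B * δ₁ * H := by
        have : |t' - t| ≤ δ₁ := (htt'.trans_le (min_le_right _ _)).le
        have : 0 ≤ ε₀ := by positivity
        have : 0 ≤ MK * B * H := by positivity
        nlinarith
    _ ≤ ε * H := by rw [hε₀]; nlinarith

noncomputable def xiKernel (g G f f₁ : ℝ → ℝ) (s : ℝ) : ℝ := f₁ s * (1 - G s) - f s * g s

lemma abs_xiKernel_le_H2norm {g G f f₁ f₂ : ℝ → ℝ} {T Mg : ℝ}
    (hG : ∀ s, 0 ≤ s → |1 - G s| ≤ 1) (hg : ∀ s ∈ Icc 0 T, |g s| ≤ Mg)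
    (hf : ∀ x, HasDerivAt f (f₁ x) x) (hf₁ : ∀ x, HasDerivAt f₁ (f₂ x) x)
    (h0 : IntegrableOn (fun x => f x ^ 2) (Ici 0)) (h1 : IntegrableOn (fun x => f₁ x ^ 2) (Ici 0))
    (h2 : IntegrableOn (fun x => f₂ x ^ 2) (Ici 0)) :
    ∀ s ∈ Icc 0 T, |xiKernel g G f f₁ s| ≤ (1 + Mg) * H2norm f f₁ f₂ := by
  intro s hs
  have hH : 0 ≤ H2norm f f₁ f₂ := Real.sqrt_nonneg _
  calc |xiKernel g G f f₁ s| ≤ |f₁ s| * |1 - G s| + |f s| * |g s| := by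
        rw [xiKernel, ← abs_mul, ← abs_mul]; exact abs_sub _ _
    _ ≤ H2norm f f₁ f₂ * 1 + H2norm f f₁ f₂ * Mg := by
        gcongr
        · exact abs_deriv_le_H2norm hf₁ h1 h2 hs.1
        · exact hG s hs.1
        · exact abs_le_H2norm f₂ hf h0 h1 hs.1
        · exact hg s hs
    _ = (1 + Mg) * H2norm f f₁ f₂ := by ring

/-- Continuity of the map `Γ : K ↦ 𝒦` where `𝒦_t(f) = f(0)K(t) + ∫₀ᵗ K(u)ξ_f(t-u)du`,
`ξ_f = f'(1-G) - fg`, viewed as an `H₋₂`-valued function: on every `[0,T]` there is `c < ∞`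
such that `|𝒦_t(f) - 𝒦̃_t(f)| ≤ c·sup_{[0,T]}|K - K̃|·‖f‖_{H²}`, and for continuous `K`
the map `t ↦ 𝒦_t` is continuous in the dual norm. -/
theorem stmt15 (g G : ℝ → ℝ) (hgc : Continuous g) (hg0 : ∀ x, 0 ≤ g x)
    (hG : ∀ x, G x = ∫ u in (0:ℝ)..x, g u)
    (hG1 : ∀ x, 0 ≤ x → G x ≤ 1) :
    ∀ T : ℝ, 0 < T → ∃ c : ℝ, 0 < c ∧
      (∀ K K' : ℝ → ℝ, Continuous K → Continuous K' → ∀ η : ℝ,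
        (∀ u ∈ Icc (0:ℝ) T, |K u - K' u| ≤ η) →
        ∀ t ∈ Icc (0:ℝ) T, ∀ f f₁ f₂ : ℝ → ℝ,
          (∀ x, HasDerivAt f (f₁ x) x) → (∀ x, HasDerivAt f₁ (f₂ x) x) →
          IntegrableOn (fun x => (f x) ^ 2) (Ici 0) →
          IntegrableOn (fun x => (f₁ x) ^ 2) (Ici 0) →
          IntegrableOn (fun x => (f₂ x) ^ 2) (Ici 0) →
          |(f 0 * K t + ∫ u in (0:ℝ)..t,
              K u * (f₁ (t - u) * (1 - G (t - u)) - f (t - u) * g (t - u))) -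
            (f 0 * K' t + ∫ u in (0:ℝ)..t,
              K' u * (f₁ (t - u) * (1 - G (t - u)) - f (t - u) * g (t - u)))|
            ≤ c * η * H2norm f f₁ f₂) ∧
      (∀ K : ℝ → ℝ, Continuous K → ∀ t ∈ Icc (0:ℝ) T, ∀ ε : ℝ, 0 < ε →
        ∃ δ : ℝ, 0 < δ ∧ ∀ t' ∈ Icc (0:ℝ) T, |t' - t| < δ →
          ∀ f f₁ f₂ : ℝ → ℝ,
            (∀ x, HasDerivAt f (f₁ x) x) → (∀ x, HasDerivAt f₁ (f₂ x) x) →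
            IntegrableOn (fun x => (f x) ^ 2) (Ici 0) →
            IntegrableOn (fun x => (f₁ x) ^ 2) (Ici 0) →
            IntegrableOn (fun x => (f₂ x) ^ 2) (Ici 0) →
            |(f 0 * K t' + ∫ u in (0:ℝ)..t',
                K u * (f₁ (t' - u) * (1 - G (t' - u)) - f (t' - u) * g (t' - u))) -
              (f 0 * K t + ∫ u in (0:ℝ)..t,
                K u * (f₁ (t - u) * (1 - G (t - u)) - f (t - u) * g (t - u)))|
              ≤ ε * H2norm f f₁ f₂) := by
  intro T hT
  have hGc : Continuous G := funext hG ▸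
    intervalIntegral.continuous_primitive (fun a b => hgc.intervalIntegrable a b) 0
  have hG01 (s : ℝ) (hs : 0 ≤ s) : |1 - G s| ≤ 1 := by
    have : 0 ≤ G s := hG s ▸ intervalIntegral.integral_nonneg hs fun u _ => hg0 u
    exact abs_le.2 ⟨by linarith [hG1 s hs], by linarith⟩
  obtain ⟨Mg, hMg⟩ := (isCompact_Icc (a := 0) (b := T)).exists_bound_of_continuousOn
    hgc.continuousOn
  have hMg0 : 0 ≤ Mg := (norm_nonneg _).trans (hMg 0 ⟨le_rfl, hT.le⟩)
  have hξc (f f₁ f₂ : ℝ → ℝ) (hf : ∀ x, HasDerivAt f (f₁ x) x)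
      (hf₁ : ∀ x, HasDerivAt f₁ (f₂ x) x) : Continuous (xiKernel g G f f₁) :=
    ((continuous_iff_continuousAt.2 fun x => (hf₁ x).continuousAt).mul
      (continuous_const.sub hGc)).sub
      ((continuous_iff_continuousAt.2 fun x => (hf x).continuousAt).mul hgc)
  refine ⟨1 + T * (1 + Mg), by positivity, ?_, ?_⟩
  · intro K K' hK hK' η hη t ht f f₁ f₂ hf hf₁ h0 h1 h2
    have hη0 : 0 ≤ η := (abs_nonneg _).trans (hη t ht)
    have hf0 : |f 0| ≤ H2norm f f₁ f₂ := abs_le_H2norm f₂ hf h0 h1 le_rfl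
    calc |convFunctional (f 0) (xiKernel g G f f₁) K t
          - convFunctional (f 0) (xiKernel g G f f₁) K' t|
        = |convFunctional (f 0) (xiKernel g G f f₁) (K - K') t| := by
          rw [convFunctional_sub hK hK' (hξc f f₁ f₂ hf hf₁)]
      _ ≤ (|f 0| + T * ((1 + Mg) * H2norm f f₁ f₂)) * η := abs_convFunctional_le hη
          (abs_xiKernel_le_H2norm hG01 hMg hf hf₁ h0 h1 h2) ht
      _ ≤ (1 + T * (1 + Mg)) * η * H2norm f f₁ f₂ := by nlinarith
  · intro K hK t ht ε hε
    obtain ⟨δ, hδ, hδK⟩ :=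
      exists_pos_forall_abs_convFunctional_sub_le hK hT.le (by positivity : 0 ≤ 1 + Mg) hε
    exact ⟨δ, hδ, fun t' ht' htt' f f₁ f₂ hf hf₁ h0 h1 h2 => hδK t ht t' ht' htt' _ _ _
      (hξc f f₁ f₂ hf hf₁) (abs_le_H2norm f₂ hf h0 h1 le_rfl)
      (abs_xiKernel_le_H2norm hG01 hMg hf hf₁ h0 h1 h2)⟩
end
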